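/- Let a, b, c > 0 be real numbers with a + b = c, let γ > −1 be real, and let k, l ∈ ℕ₀ with l ≤ k. Then ∫₀^∞ L_l^{γ}(a t) L_k^{γ}(b t) e^{−c t} t^{γ} dt = [Γ(k+l+γ+1) / (l! k!)] · b^l a^k / c^{k+l+γ+1}, where Γ is the Gamma function. -/

import Mathlib

open MeasureTheory

/-- Generalized binomial coefficient `C(t, j) = t(t-1)⋯(t-j+1)/j!`. -/
noncomputable def genChoose (t : ℝ) (j : ℕ) : ℝ :=
  (∏ i ∈ Finset.range j, (t - (i : ℝ))) / (Nat.factorial j : ℝ)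

/-- Laguerre polynomial `L_k^γ(x) = ∑_{j=0}^k (-1)^j C(k+γ, k-j) x^j / j!`. -/
noncomputable def laguerre (γ : ℝ) (k : ℕ) (x : ℝ) : ℝ :=
  ∑ j ∈ Finset.range (k + 1),
    (-1 : ℝ) ^ j * genChoose ((k : ℝ) + γ) (k - j) * x ^ j / (Nat.factorial j : ℝ)

/-!
Write `J_γ(l, k)` for the integral. Since `(e^{-x} L_l^γ)' = -e^{-x} L_l^{γ+1}` and
`(e^{-x} x^{γ+1} L_k^{γ+1})' = (k+1) e^{-x} x^γ L_{k+1}^γ`, and `e^{-at} e^{-bt} = e^{-ct}`,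
integrating by parts against `e^{-at} L_l^γ(at) · e^{-bt} t^{γ+1} L_k^{γ+1}(bt)` gives
`(k+1) J_γ(l, k+1) = a J_{γ+1}(l, k)`. The integral is symmetric under `(a, l) ↔ (b, k)`, so the
same recursion lowers `l` too, and everything reduces to the Gamma integral `J_γ(0, 0)`.
-/

open Polynomial Real Set Filter Topology Nat

lemma genChoose_zero_right (t : ℝ) : genChoose t 0 = 1 := by simp [genChoose]

lemma succ_mul_genChoose_succ (t : ℝ) (m : ℕ) :
    (m + 1) * genChoose t (m + 1) = (t - m) * genChoose t m := by
  rw [genChoose, genChoose, Finset.prod_range_succ, factorial_succ]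
  push_cast
  field_simp

lemma genChoose_eq_choose (t : ℝ) (j : ℕ) : genChoose t j = Ring.choose t j := by
  rw [Ring.choose_eq_smul, genChoose, ← aeval_eq_smeval, aeval_def, ← eval_map,
    descPochhammer_map, descPochhammer_eval_eq_prod_range, smul_eq_mul, inv_mul_eq_div]

lemma genChoose_succ_succ (t : ℝ) (m : ℕ) :
    genChoose (t + 1) (m + 1) = genChoose t m + genChoose t (m + 1) := by
  simp only [genChoose_eq_choose, Ring.choose_succ_succ]

noncomputable def laguerrePoly (γ : ℝ) (k : ℕ) : ℝ[X] :=
  ∑ j ∈ Finset.range (k + 1), C ((-1) ^ j * genChoose (k + γ) (k - j) / j !) * X ^ j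

lemma eval_laguerrePoly (γ : ℝ) (k : ℕ) (x : ℝ) : (laguerrePoly γ k).eval x = laguerre γ k x := by
  simp only [laguerrePoly, laguerre, eval_finsetSum, eval_mul, eval_C, eval_pow, eval_X]
  refine Finset.sum_congr rfl fun j _ => ?_
  ring

lemma coeff_laguerrePoly (γ : ℝ) (k j : ℕ) :
    (laguerrePoly γ k).coeff j =
      if j ≤ k then (-1) ^ j * genChoose (k + γ) (k - j) / j ! else 0 := by
  simp [laguerrePoly]

lemma derivative_laguerrePoly (γ : ℝ) (k : ℕ) :
    derivative (laguerrePoly γ k) = laguerrePoly γ k - laguerrePoly (γ + 1) k := by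
  ext j
  rw [coeff_derivative, coeff_sub, coeff_laguerrePoly, coeff_laguerrePoly, coeff_laguerrePoly]
  rcases lt_trichotomy j k with hj | rfl | hj
  · obtain ⟨m, rfl⟩ := Nat.exists_eq_add_of_lt hj
    rw [if_pos (by omega), if_pos (by omega), if_pos (by omega),
      show j + m + 1 - (j + 1) = m by omega, show j + m + 1 - j = m + 1 by omega,
      show ((j + m + 1 : ℕ) : ℝ) + (γ + 1) = (j + m + 1 : ℕ) + γ + 1 by ring,
      genChoose_succ_succ, pow_succ, factorial_succ]
    push_cast
    field_simp
    ring
  · simp [genChoose_zero_right]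
  · rw [if_neg (by omega), if_neg (by omega), if_neg (by omega)]
    ring

lemma succ_mul_laguerrePoly_succ (γ : ℝ) (k : ℕ) :
    C ((k : ℝ) + 1) * laguerrePoly γ (k + 1) =
      C (γ + 1) * laguerrePoly (γ + 1) k - X * laguerrePoly (γ + 1 + 1) k := by
  have hT : ((k + 1 : ℕ) : ℝ) + γ = k + (γ + 1) := by push_cast; ring
  ext j
  rcases j with _ | i
  · simp only [coeff_C_mul, coeff_sub, coeff_X_mul_zero, coeff_laguerrePoly, hT]
    simpa using succ_mul_genChoose_succ (k + (γ + 1)) k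
  · simp only [coeff_C_mul, coeff_sub, coeff_X_mul, coeff_laguerrePoly, hT]
    rcases lt_trichotomy i k with hi | rfl | hi
    · obtain ⟨m, rfl⟩ := Nat.exists_eq_add_of_lt hi
      rw [if_pos (by omega), if_pos (by omega), if_pos (by omega),
        show i + m + 1 + 1 - (i + 1) = m + 1 by omega, show i + m + 1 - (i + 1) = m by omega,
        show i + m + 1 - i = m + 1 by omega,
        show ((i + m + 1 : ℕ) : ℝ) + (γ + 1 + 1) = (i + m + 1 : ℕ) + (γ + 1) + 1 by ring,
        genChoose_succ_succ, pow_succ, factorial_succ]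
      have hs := succ_mul_genChoose_succ ((i + m + 1 : ℕ) + (γ + 1)) m
      push_cast at hs ⊢
      field_simp
      linear_combination -hs
    · simp [genChoose_zero_right, pow_succ, factorial_succ]
      field_simp
    · rw [if_neg (by omega), if_neg (by omega), if_neg (by omega)]
      ring

lemma hasDerivAt_laguerre (γ : ℝ) (k : ℕ) (x : ℝ) :
    HasDerivAt (laguerre γ k) (laguerre γ k x - laguerre (γ + 1) k x) x := by
  have h := (laguerrePoly γ k).hasDerivAt x
  simp only [eval_laguerrePoly, derivative_laguerrePoly, eval_sub] at h
  exact h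

lemma succ_mul_laguerre_succ (γ : ℝ) (k : ℕ) (x : ℝ) :
    (k + 1) * laguerre γ (k + 1) x =
      (γ + 1) * laguerre (γ + 1) k x - x * laguerre (γ + 1 + 1) k x := by
  simpa [eval_laguerrePoly] using congrArg (eval x) (succ_mul_laguerrePoly_succ γ k)

lemma hasDerivAt_exp_neg_mul_laguerre (γ a : ℝ) (k : ℕ) (t : ℝ) :
    HasDerivAt (fun t => exp (-(a * t)) * laguerre γ k (a * t))
      (-a * (exp (-(a * t)) * laguerre (γ + 1) k (a * t))) t := by
  have hlin : HasDerivAt (fun t => a * t) a t := by simpa using (hasDerivAt_id t).const_mul a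
  have hL : HasDerivAt (fun t => laguerre γ k (a * t))
      ((laguerre γ k (a * t) - laguerre (γ + 1) k (a * t)) * a) t :=
    (hasDerivAt_laguerre γ k (a * t)).comp t hlin
  exact (hlin.neg.exp.mul hL).congr_deriv (by simp only [Pi.neg_apply]; ring)

lemma hasDerivAt_exp_neg_mul_rpow_mul_laguerre (γ b : ℝ) (k : ℕ) {t : ℝ} (ht : 0 < t) :
    HasDerivAt (fun t => exp (-(b * t)) * t ^ (γ + 1) * laguerre (γ + 1) k (b * t))
      ((k + 1) * (exp (-(b * t)) * t ^ γ * laguerre γ (k + 1) (b * t))) t := by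
  have hlin : HasDerivAt (fun t => b * t) b t := by simpa using (hasDerivAt_id t).const_mul b
  have hpow : HasDerivAt (fun t => t ^ (γ + 1)) ((γ + 1) * t ^ γ) t := by
    simpa using hasDerivAt_rpow_const (p := γ + 1) (Or.inl ht.ne')
  have hL : HasDerivAt (fun t => laguerre (γ + 1) k (b * t))
      ((laguerre (γ + 1) k (b * t) - laguerre (γ + 1 + 1) k (b * t)) * b) t :=
    (hasDerivAt_laguerre (γ + 1) k (b * t)).comp t hlin
  refine ((hlin.neg.exp.mul hpow).mul hL).congr_deriv ?_
  simp only [Pi.mul_apply]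
  rw [rpow_add_one ht.ne']
  linear_combination (-(exp (-(b * t)) * t ^ γ)) * succ_mul_laguerre_succ γ k (b * t)

lemma integrableOn_eval_mul_exp_neg_mul_rpow (P : ℝ[X]) {c s : ℝ} (hc : 0 < c) (hs : -1 < s) :
    IntegrableOn (fun t => P.eval t * exp (-(c * t)) * t ^ s) (Ioi 0) := by
  induction P using Polynomial.induction_on' with
  | add p q hp hq =>
    exact (hp.add hq).congr_fun (fun t _ => by simp only [Pi.add_apply, eval_add, add_mul])
      measurableSet_Ioi
  | monomial n a =>
    have hsn : -1 < s + n := by linarith [(n.cast_nonneg : (0 : ℝ) ≤ n)]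
    refine IntegrableOn.congr_fun
      ((integrableOn_rpow_mul_exp_neg_mul_rpow hsn one_pos hc).const_mul a)
      (fun t ht => ?_) measurableSet_Ioi
    simp only [eval_monomial, rpow_one, neg_mul, rpow_add ht, rpow_natCast]
    ring

lemma tendsto_eval_mul_exp_neg_mul_rpow_atTop (P : ℝ[X]) {c : ℝ} (hc : 0 < c) (s : ℝ) :
    Tendsto (fun t => P.eval t * exp (-(c * t)) * t ^ s) atTop (𝓝 0) := by
  induction P using Polynomial.induction_on' with
  | add p q hp hq => simpa only [eval_add, add_mul, add_zero] using hp.add hq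
  | monomial n a =>
    have h := (tendsto_rpow_mul_exp_neg_mul_atTop_nhds_zero (s + n) c hc).const_mul a
    rw [mul_zero] at h
    refine h.congr' ?_
    filter_upwards [Ioi_mem_atTop 0] with t ht
    simp only [eval_monomial, neg_mul, rpow_add ht, rpow_natCast]
    ring

lemma laguerre_zero (γ x : ℝ) : laguerre γ 0 x = 1 := by simp [laguerre, genChoose_zero_right]

lemma continuous_laguerre (γ : ℝ) (k : ℕ) : Continuous (laguerre γ k) := by
  simpa only [eval_laguerrePoly] using (laguerrePoly γ k).continuous

lemma laguerre_mul_laguerre_eq_eval (γ₁ γ₂ a b t : ℝ) (l k : ℕ) :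
    laguerre γ₁ l (a * t) * laguerre γ₂ k (b * t) =
      ((laguerrePoly γ₁ l).comp (C a * X) * (laguerrePoly γ₂ k).comp (C b * X)).eval t := by
  simp [eval_laguerrePoly]

lemma integrableOn_laguerre_mul_laguerre (γ₁ γ₂ a b : ℝ) (l k : ℕ) {c s : ℝ} (hc : 0 < c)
    (hs : -1 < s) :
    IntegrableOn (fun t => laguerre γ₁ l (a * t) * laguerre γ₂ k (b * t) * exp (-(c * t)) * t ^ s)
      (Ioi 0) := by
  simpa only [laguerre_mul_laguerre_eq_eval] using integrableOn_eval_mul_exp_neg_mul_rpow _ hc hs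

lemma tendsto_laguerre_mul_laguerre_atTop (γ₁ γ₂ a b : ℝ) (l k : ℕ) {c : ℝ} (hc : 0 < c) (s : ℝ) :
    Tendsto (fun t => laguerre γ₁ l (a * t) * laguerre γ₂ k (b * t) * exp (-(c * t)) * t ^ s)
      atTop (𝓝 0) := by
  simpa only [laguerre_mul_laguerre_eq_eval] using tendsto_eval_mul_exp_neg_mul_rpow_atTop _ hc s

noncomputable def laguerreIntegral (a b c γ : ℝ) (l k : ℕ) : ℝ :=
  ∫ t in Ioi 0, laguerre γ l (a * t) * laguerre γ k (b * t) * exp (-(c * t)) * t ^ γ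

lemma laguerreIntegral_comm (a b c γ : ℝ) (l k : ℕ) :
    laguerreIntegral a b c γ l k = laguerreIntegral b a c γ k l := by
  simp only [laguerreIntegral, mul_comm (laguerre γ l _)]

lemma laguerreIntegral_zero_zero (a b : ℝ) {c γ : ℝ} (hc : 0 < c) (hγ : -1 < γ) :
    laguerreIntegral a b c γ 0 0 = Gamma (γ + 1) / c ^ (γ + 1) := by
  have h := integral_rpow_mul_exp_neg_mul_Ioi (a := γ + 1) (by linarith) hc
  simp only [add_sub_cancel_right] at h
  simp only [laguerreIntegral, laguerre_zero, one_mul, mul_comm (exp _)]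
  rw [h, one_div, inv_rpow hc.le, div_eq_mul_inv, mul_comm]

lemma succ_mul_laguerreIntegral_succ {a b c γ : ℝ} (hc : 0 < c) (habc : a + b = c) (hγ : -1 < γ)
    (l k : ℕ) :
    (k + 1) * laguerreIntegral a b c γ l (k + 1) = a * laguerreIntegral a b c (γ + 1) l k := by
  have hexp (t : ℝ) : exp (-(c * t)) = exp (-(a * t)) * exp (-(b * t)) := by
    rw [← exp_add, ← habc]; ring_nf
  set f : ℝ → ℝ := fun t =>
    exp (-(a * t)) * laguerre γ l (a * t) *
      (exp (-(b * t)) * t ^ (γ + 1) * laguerre (γ + 1) k (b * t))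
  set F : ℝ → ℝ := fun t =>
    laguerre γ l (a * t) * laguerre γ (k + 1) (b * t) * exp (-(c * t)) * t ^ γ
  set G : ℝ → ℝ := fun t =>
    laguerre (γ + 1) l (a * t) * laguerre (γ + 1) k (b * t) * exp (-(c * t)) * t ^ (γ + 1)
  have hF : IntegrableOn F (Ioi 0) := integrableOn_laguerre_mul_laguerre γ γ a b l (k + 1) hc hγ
  have hG : IntegrableOn G (Ioi 0) :=
    integrableOn_laguerre_mul_laguerre (γ + 1) (γ + 1) a b l k hc (s := γ + 1) (by linarith)
  have hderiv : ∀ t ∈ Ioi (0 : ℝ), HasDerivAt f (-a * G t + (k + 1) * F t) t := fun t ht =>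
    ((hasDerivAt_exp_neg_mul_laguerre γ a l t).mul
      (hasDerivAt_exp_neg_mul_rpow_mul_laguerre γ b k ht)).congr_deriv
      (by simp only [F, G, hexp]; ring)
  have hcont : ContinuousWithinAt f (Ici 0) 0 := by
    have := continuous_laguerre γ l
    have := continuous_laguerre (γ + 1) k
    have : ContinuousAt (fun t : ℝ => t ^ (γ + 1)) 0 :=
      continuousAt_rpow_const _ _ (Or.inr (by linarith))
    exact ContinuousAt.continuousWithinAt (by fun_prop)
  have hlim : Tendsto f atTop (𝓝 0) := by
    refine (tendsto_laguerre_mul_laguerre_atTop γ (γ + 1) a b l k hc (γ + 1)).congr fun t => ?_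
    simp only [f, hexp]
    ring
  have hf0 : f 0 = 0 := by simp [f, zero_rpow (show γ + 1 ≠ 0 by linarith)]
  have h := integral_Ioi_of_hasDerivAt_of_tendsto hcont hderiv
    ((hG.const_mul (-a)).add (hF.const_mul (k + 1))) hlim
  rw [integral_add (hG.const_mul (-a)) (hF.const_mul (k + 1)), integral_const_mul,
    integral_const_mul, hf0, sub_zero] at h
  simp only [laguerreIntegral]
  linarith

lemma laguerreIntegral_zero_right {a b c γ : ℝ} (hc : 0 < c) (habc : a + b = c) (hγ : -1 < γ)
    (l : ℕ) :
    laguerreIntegral a b c γ l 0 = Gamma (l + γ + 1) / l ! * (b ^ l / c ^ (l + γ + 1)) := by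
  induction l generalizing γ with
  | zero => simp [laguerreIntegral_zero_zero a b hc hγ, div_eq_mul_inv]
  | succ l ih =>
    have hrec := succ_mul_laguerreIntegral_succ hc (add_comm a b ▸ habc) hγ 0 l
    rw [laguerreIntegral_comm b a, laguerreIntegral_comm b a, ih (by linarith)] at hrec
    rw [show ((l + 1 : ℕ) : ℝ) + γ + 1 = l + (γ + 1) + 1 by push_cast; ring,
      ← mul_right_inj' (show (l : ℝ) + 1 ≠ 0 by positivity), hrec, factorial_succ]
    push_cast
    field_simp
    ring

theorem stmt3_general (a b c γ : ℝ) (hc : 0 < c) (habc : a + b = c)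
    (hγ : -1 < γ) (k l : ℕ) :
    (∫ t in Set.Ioi (0 : ℝ),
        laguerre γ l (a * t) * laguerre γ k (b * t) * Real.exp (-(c * t)) * t ^ γ)
      = Real.Gamma ((k : ℝ) + l + γ + 1) / ((Nat.factorial l : ℝ) * (Nat.factorial k : ℝ)) *
          (b ^ l * a ^ k / c ^ ((k : ℝ) + l + γ + 1)) := by
  change laguerreIntegral a b c γ l k = _
  induction k generalizing γ with
  | zero => simp [laguerreIntegral_zero_right hc habc hγ]
  | succ k ih =>
    rw [show ((k + 1 : ℕ) : ℝ) + l + γ + 1 = k + l + (γ + 1) + 1 by push_cast; ring,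
      ← mul_right_inj' (show (k : ℝ) + 1 ≠ 0 by positivity),
      succ_mul_laguerreIntegral_succ hc habc hγ, ih (γ + 1) (by linarith), factorial_succ]
    push_cast
    field_simp
    ring

theorem stmt3 (a b c γ : ℝ) (ha : 0 < a) (hb : 0 < b) (hc : 0 < c) (habc : a + b = c)
    (hγ : -1 < γ) (k l : ℕ) (hlk : l ≤ k) :
    (∫ t in Set.Ioi (0 : ℝ),
        laguerre γ l (a * t) * laguerre γ k (b * t) * Real.exp (-(c * t)) * t ^ γ)
      = Real.Gamma ((k : ℝ) + l + γ + 1) / ((Nat.factorial l : ℝ) * (Nat.factorial k : ℝ)) *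
          (b ^ l * a ^ k / c ^ ((k : ℝ) + l + γ + 1)) :=
  stmt3_general a b c γ hc habc hγ k l
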